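/- arXiv:2502.00494 — 4 statements merged into one kernel-verified Lean document; each statement's English description precedes it below -/
import Mathlib

section
/- Let D be a finite set with n = |D| ≥ 1 and let D_i ⊆ D. For every function v : 2^D → ℝ, the sum of the Shapley values of the elements of D_i equals Σ_{x ∈ D_i} φ^SV_x(D, v) = Σ_{S : ∅ ≠ S ⊊ D} (|D_i ∩ S|·n − |D_i|·|S|)·((|S|−1)!·(n−|S|−1)!/n!)·v(S) + (|D_i|/n)·v(D) − (|D_i|/n)·v(∅). -/
/-!
Splitting `D = insert x (D.erase x)`, the weighted marginal contributions of `x` form a linear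
combination of the values `v T`, `T ⊆ D`: `v T` has coefficient `w(|T| - 1)` if `x ∈ T` and
`-w(|T|)` otherwise. Summing over `x ∈ Dᵢ`, the coefficient of `v T` becomes
`|Dᵢ ∩ T| w(|T| - 1) - (|Dᵢ| - |Dᵢ ∩ T|) w(|T|)`. For `0 < t < n` one has `w(t - 1) = (n - t) K`
and `w(t) = t K` with `K = (t-1)! (n-t-1)! / n!`, which collapses this to `(|Dᵢ ∩ T| n - |Dᵢ| t) K`;
for `T = ∅` and `T = D` only `w(0) = w(n - 1) = 1 / n` survives.
-/

open Finset

/-- Shapley weight `w_n(k) = k! (n-k-1)! / n!`. -/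
noncomputable def w (m k : ℕ) : ℝ :=
  (Nat.factorial k : ℝ) * (Nat.factorial (m - k - 1) : ℝ) / (Nat.factorial m : ℝ)

namespace Finset

variable {α R : Type*} [DecidableEq α]

theorem sum_powerset_erase_mul_sub [Ring R] {D : Finset α} {x : α} (hx : x ∈ D)
    (c : ℕ → R) (v : Finset α → R) :
    ∑ S ∈ (D.erase x).powerset, c #S * (v (insert x S) - v S)
      = ∑ T ∈ D.powerset, (if x ∈ T then c (#T - 1) else -c #T) * v T := by
  conv_rhs => rw [← insert_erase hx]
  have hxS {S} (hS : S ∈ (D.erase x).powerset) : x ∉ S :=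
    fun h => notMem_erase x D (mem_powerset.1 hS h)
  simp only [mul_sub, sum_sub_distrib]
  rw [sum_powerset_insert (notMem_erase x D), add_comm, sub_eq_add_neg, ← sum_neg_distrib]
  congr 1 <;> refine sum_congr rfl fun S hS => ?_
  · rw [if_pos (mem_insert_self x S), card_insert_of_notMem (hxS hS), Nat.add_sub_cancel]
  · rw [if_neg (hxS hS), neg_mul]

theorem sum_ite_mem_neg [Ring R] (s T : Finset α) (a b : R) :
    ∑ x ∈ s, (if x ∈ T then a else -b) = #(s ∩ T) * a - (#s - #(s ∩ T)) * b := by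
  rw [sum_ite, sum_const, sum_const, filter_mem_eq_inter, filter_notMem_eq_sdiff, nsmul_eq_mul,
    nsmul_eq_mul, ← card_inter_add_card_sdiff s T, Nat.cast_add, add_sub_cancel_left, mul_neg,
    sub_eq_add_neg]

theorem sum_powerset_eq_sum_filter_ne_add_self_add_empty [AddCommMonoid R] {s : Finset α} (hs : s.Nonempty)
    (f : Finset α → R) :
    ∑ T ∈ s.powerset, f T = ∑ T ∈ s.powerset.filter (fun T => T ≠ ∅ ∧ T ≠ s), f T + f s + f ∅ := by
  have hends : s.powerset.filter (fun T => ¬(T ≠ ∅ ∧ T ≠ s)) = {s, ∅} := by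
    ext T
    simp only [mem_filter, mem_powerset, not_and_or, not_not, mem_insert, mem_singleton]
    constructor
    · rintro ⟨-, h | h⟩ <;> simp [h]
    · rintro (rfl | rfl) <;> simp
  rw [← sum_filter_add_sum_filter_not s.powerset (fun T => T ≠ ∅ ∧ T ≠ s), hends,
    sum_pair hs.ne_empty, add_assoc]

end Finset

theorem w_zero {n : ℕ} (hn : n ≠ 0) : w n 0 = 1 / n := by
  have : ((n - 1).factorial : ℝ) ≠ 0 := by positivity
  rw [w, Nat.factorial_zero, Nat.sub_zero, ← Nat.mul_factorial_pred hn]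
  push_cast
  field_simp

theorem w_pred_self {n : ℕ} (hn : n ≠ 0) : w n (n - 1) = 1 / n := by
  have : ((n - 1).factorial : ℝ) ≠ 0 := by positivity
  rw [w, Nat.sub_sub_self (by omega), Nat.sub_self, Nat.factorial_zero, ← Nat.mul_factorial_pred hn]
  push_cast
  field_simp

theorem mul_w_pred_sub_mul_w {n t : ℕ} (ht : t ≠ 0) (htn : t < n) (a d : ℝ) :
    a * w n (t - 1) - (d - a) * w n t
      = (a * n - d * t) * ((t - 1).factorial * (n - t - 1).factorial / n.factorial) := by
  have hsub : n - (t - 1) - 1 = n - t := by omega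
  rw [w, w, hsub, ← Nat.mul_factorial_pred ht, ← Nat.mul_factorial_pred (n := n - t) (by omega)]
  push_cast [Nat.cast_sub htn.le]
  ring

/-- Coefficient representation of the client-level Shapley value: the sum of
the Shapley values of the blocks in `Di ⊆ D` as a weighted sum of utilities. -/
theorem shapley_client_level_coefficients {α : Type*} [DecidableEq α]
    (D Di : Finset α) (hDi : Di ⊆ D) (hn : 1 ≤ D.card) (v : Finset α → ℝ) :
    ∑ x ∈ Di, ∑ S ∈ (D.erase x).powerset,
        w D.card S.card * (v (insert x S) - v S)
      = (∑ S ∈ D.powerset.filter (fun S => S ≠ ∅ ∧ S ≠ D),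
          (((Di ∩ S).card * D.card : ℝ) - ((Di.card : ℝ) * (S.card : ℝ)))
            * ((Nat.factorial (S.card - 1) : ℝ) * (Nat.factorial (D.card - S.card - 1) : ℝ)
                / (Nat.factorial D.card : ℝ)) * v S)
        + (Di.card : ℝ) / (D.card : ℝ) * v D
        - (Di.card : ℝ) / (D.card : ℝ) * v ∅ := by
  have hn0 : #D ≠ 0 := Nat.one_le_iff_ne_zero.1 hn
  calc _ = ∑ x ∈ Di, ∑ T ∈ D.powerset, (if x ∈ T then w #D (#T - 1) else -w #D #T) * v T :=
        sum_congr rfl fun x hx => sum_powerset_erase_mul_sub (hDi hx) _ v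
    _ = ∑ T ∈ D.powerset, (#(Di ∩ T) * w #D (#T - 1) - (#Di - #(Di ∩ T)) * w #D #T) * v T := by
        rw [sum_comm]; simp only [← sum_mul, sum_ite_mem_neg]
    _ = _ := by
        rw [sum_powerset_eq_sum_filter_ne_add_self_add_empty (card_pos.1 hn), inter_eq_left.2 hDi, inter_empty,
          card_empty, w_zero hn0, w_pred_self hn0, sub_eq_add_neg _ (_ * v ∅)]
        refine congrArg₂ (· + ·) (congrArg₂ (· + ·) (sum_congr rfl fun T hT => ?_) (by ring))
          (by ring)
        obtain ⟨hTD, hT0, hTD'⟩ : T ⊆ D ∧ T ≠ ∅ ∧ T ≠ D := by simpa using hT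
        rw [mul_w_pred_sub_mul_w (card_ne_zero.2 (nonempty_iff_ne_empty.2 hT0))
          (card_lt_card (ssubset_of_subset_of_ne hTD hTD'))]
end

section
/- Let N be a finite nonempty set of clients, where each client i ∈ N owns a finite nonempty set D_i of data blocks, the sets D_i are pairwise disjoint, and D = ⋃_{i∈N} D_i. Fix a client i and let β_i, β_{-i} : 2^D → ℝ. Suppose there exists a proper subset S₀ ⊊ D such that either (D_i ⊆ S₀ and (β_i(S₀) < 0 or β_{-i}(S₀) > 0)) or (D_i ⊄ S₀ and (β_i(S₀) ≠ 0 or β_{-i}(S₀) ≠ 0)). Then there exist functions a, â : 2^D → ℝ with â(D) = a(D) and a(S) ≥ â(S) for every proper subset S ⊊ D with D_i ⊆ S, such that Σ_{S ⊆ D} β_i(S)·â(S) > Σ_{S ⊆ D} β_i(S)·a(S) or Σ_{S ⊆ D} β_{-i}(S)·â(S) < Σ_{S ⊆ D} β_{-i}(S)·a(S). -/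
open Finset

/-- Necessity direction of Theorem 4.3 (Characterization 1): if the sign and
vanishing conditions on the coefficients fail at some proper subset `S₀ ⊊ D`,
then there exists a configuration of expected utilities, consistent with
Assumption 4.2, under which untruthful reporting strictly increases client
`i`'s expected value or strictly decreases the other clients' total value. -/
theorem characterization1_necessity {α : Type*} [DecidableEq α]
    {ι : Type*} [Fintype ι] [Nonempty ι]
    (Dset : ι → Finset α) (hne : ∀ i, (Dset i).Nonempty)
    (hdisj : ∀ i j : ι, i ≠ j → Disjoint (Dset i) (Dset j))
    (D : Finset α) (hD : D = Finset.univ.biUnion Dset)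
    (i : ι) (βi βmi : Finset α → ℝ)
    (hbad : ∃ S₀ : Finset α, S₀ ⊂ D ∧
      ((Dset i ⊆ S₀ ∧ (βi S₀ < 0 ∨ 0 < βmi S₀)) ∨
       (¬ Dset i ⊆ S₀ ∧ (βi S₀ ≠ 0 ∨ βmi S₀ ≠ 0)))) :
    ∃ a ah : Finset α → ℝ,
      ah D = a D ∧
      (∀ S : Finset α, S ⊂ D → Dset i ⊆ S → ah S ≤ a S) ∧
      ((∑ S ∈ D.powerset, βi S * a S < ∑ S ∈ D.powerset, βi S * ah S) ∨
       (∑ S ∈ D.powerset, βmi S * ah S < ∑ S ∈ D.powerset, βmi S * a S)) := by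
  obtain ⟨S₀, hS₀, hcase⟩ := hbad
  have hmem : S₀ ∈ D.powerset := mem_powerset.2 hS₀.subset
  have hne' : S₀ ≠ D := hS₀.ne
  -- choose perturbation constant c
  obtain ⟨c, hc1, hc2⟩ :
      ∃ c : ℝ, (Dset i ⊆ S₀ → c ≤ 0) ∧ (0 < βi S₀ * c ∨ βmi S₀ * c < 0) := by
    rcases hcase with ⟨hsub, hb | hb⟩ | ⟨hnsub, hb | hb⟩
    · exact ⟨-1, fun _ => by norm_num, Or.inl (by nlinarith)⟩
    · exact ⟨-1, fun _ => by norm_num, Or.inr (by nlinarith)⟩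
    · exact ⟨βi S₀, fun h => absurd h hnsub, Or.inl (mul_self_pos.2 hb)⟩
    · exact ⟨-(βmi S₀), fun h => absurd h hnsub, Or.inr (by nlinarith [mul_self_pos.2 hb])⟩
  refine ⟨fun _ => 0, fun S => if S = S₀ then c else 0, by simp [Ne.symm hne'], ?_, ?_⟩
  · intro S hS hDi
    by_cases h : S = S₀
    · subst h; simpa using hc1 hDi
    · simp [h]
  · have key : ∀ β : Finset α → ℝ,
        (∑ S ∈ D.powerset, β S * (if S = S₀ then c else 0)) = β S₀ * c := by
      intro β
      rw [Finset.sum_eq_single S₀]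
      · simp
      · intro b _ hb; simp [hb]
      · intro h; exact absurd hmem h
    rcases hc2 with h | h
    · left; rw [key]; simpa using h
    · right; rw [key]; simpa using h
end

section
/- Let N be a finite nonempty set and fix i ∈ N. For each i' ∈ N let γ_{i'} : 2^N → ℝ be such that γ_{i'}(C) ≥ 0 for every C ⊊ N with i' ∈ C, and such that Σ_{i'∈N} γ_{i'}(C) = 0 for every C ⊊ N. Then for all functions a, â : 2^N → ℝ satisfying â(N) = a(N), â(C) = a(C) for every C ⊆ N with i ∉ C, and a(C) ≥ â(C) for every C ⊊ N with i ∈ C, the following hold: Σ_{C ⊆ N} γ_i(C)·â(C) ≤ Σ_{C ⊆ N} γ_i(C)·a(C), and Σ_{C ⊆ N} (Σ_{i'∈N, i'≠i} γ_{i'}(C))·â(C) ≥ Σ_{C ⊆ N} (Σ_{i'∈N, i'≠i} γ_{i'}(C))·a(C). -/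
open Finset

/-! Pointwise in the coalition `C`: the deviation `a C - ah C` vanishes unless `C` is a proper
coalition containing `i`, where it is nonnegative, `γ i C ≥ 0`, and by efficiency the other
clients' coefficients sum to `-γ i C`. Summing over `C` gives both inequalities. -/

lemma sum_univ_erase_eq_neg_of_sum_eq_zero {ι M : Type*} [Fintype ι] [DecidableEq ι]
    [AddCommGroup M] {f : ι → M} (hf : ∑ j, f j = 0) (i : ι) :
    ∑ j ∈ univ.erase i, f j = -f i := by
  rw [sum_erase_eq_sub (mem_univ i), hf, zero_sub]

section Coalition

variable {ι : Type*} [Fintype ι] [DecidableEq ι] {i : ι} {γ : ι → Finset ι → ℝ}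
  {a ah : Finset ι → ℝ} (C : Finset ι)

lemma self_coeff_mul_le
    (hpos : ∀ C : Finset ι, C ⊂ univ → i ∈ C → 0 ≤ γ i C)
    (hfull : ah univ = a univ) (hnoti : ∀ C : Finset ι, i ∉ C → ah C = a C)
    (hopt : ∀ C : Finset ι, C ⊂ univ → i ∈ C → ah C ≤ a C) :
    γ i C * ah C ≤ γ i C * a C := by
  by_cases hi : i ∈ C
  · rcases (subset_univ C).eq_or_ssubset with rfl | hC
    · rw [hfull]
    · exact mul_le_mul_of_nonneg_left (hopt C hC hi) (hpos C hC hi)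
  · rw [hnoti C hi]

lemma others_coeff_mul_le
    (hpos : ∀ C : Finset ι, C ⊂ univ → i ∈ C → 0 ≤ γ i C)
    (hsum : ∀ C : Finset ι, C ⊂ univ → ∑ i' : ι, γ i' C = 0)
    (hfull : ah univ = a univ) (hnoti : ∀ C : Finset ι, i ∉ C → ah C = a C)
    (hopt : ∀ C : Finset ι, C ⊂ univ → i ∈ C → ah C ≤ a C) :
    (∑ i' ∈ univ.erase i, γ i' C) * a C ≤ (∑ i' ∈ univ.erase i, γ i' C) * ah C := by
  rcases (subset_univ C).eq_or_ssubset with rfl | hC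
  · rw [hfull]
  · rw [sum_univ_erase_eq_neg_of_sum_eq_zero (hsum C hC), neg_mul, neg_mul, neg_le_neg_iff]
    exact self_coeff_mul_le C hpos hfull hnoti hopt

end Coalition

theorem characterization2_sufficiency_general {ι : Type*} [Fintype ι] [DecidableEq ι]
    (i : ι) (γ : ι → Finset ι → ℝ)
    (hpos : ∀ i' : ι, ∀ C : Finset ι, C ⊂ Finset.univ → i' ∈ C → 0 ≤ γ i' C)
    (hsum : ∀ C : Finset ι, C ⊂ Finset.univ → ∑ i' : ι, γ i' C = 0)
    (a ah : Finset ι → ℝ)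
    (hfull : ah Finset.univ = a Finset.univ)
    (hnoti : ∀ C : Finset ι, i ∉ C → ah C = a C)
    (hopt : ∀ C : Finset ι, C ⊂ Finset.univ → i ∈ C → ah C ≤ a C) :
    (∑ C : Finset ι, γ i C * ah C ≤ ∑ C : Finset ι, γ i C * a C) ∧
    (∑ C : Finset ι, (∑ i' ∈ Finset.univ.erase i, γ i' C) * a C
      ≤ ∑ C : Finset ι, (∑ i' ∈ Finset.univ.erase i, γ i' C) * ah C) :=
  ⟨sum_le_sum fun C _ => self_coeff_mul_le C (hpos i) hfull hnoti hopt,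
    sum_le_sum fun C _ => others_coeff_mul_le C (hpos i) hsum hfull hnoti hopt⟩

/-- Sufficiency direction of Theorem 4.4 (Characterization 2), stated
algebraically over coalitions `C ⊆ N`: any linear, efficient metric of the
coalition form with nonnegative coefficients on proper coalitions containing
client `i` is Bayesian incentive compatible. -/
theorem characterization2_sufficiency {ι : Type*} [Fintype ι] [DecidableEq ι] [Nonempty ι]
    (i : ι) (γ : ι → Finset ι → ℝ)
    (hpos : ∀ i' : ι, ∀ C : Finset ι, C ⊂ Finset.univ → i' ∈ C → 0 ≤ γ i' C)
    (hsum : ∀ C : Finset ι, C ⊂ Finset.univ → ∑ i' : ι, γ i' C = 0)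
    (a ah : Finset ι → ℝ)
    (hfull : ah Finset.univ = a Finset.univ)
    (hnoti : ∀ C : Finset ι, i ∉ C → ah C = a C)
    (hopt : ∀ C : Finset ι, C ⊂ Finset.univ → i ∈ C → ah C ≤ a C) :
    (∑ C : Finset ι, γ i C * ah C ≤ ∑ C : Finset ι, γ i C * a C) ∧
    (∑ C : Finset ι, (∑ i' ∈ Finset.univ.erase i, γ i' C) * a C
      ≤ ∑ C : Finset ι, (∑ i' ∈ Finset.univ.erase i, γ i' C) * ah C) :=
  characterization2_sufficiency_general i γ hpos hsum a ah hfull hnoti hopt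
end

section
/- Let N be a finite nonempty set of clients with n = |N|, where each client i ∈ N owns a finite nonempty set D_i of data blocks, the sets D_i are pairwise disjoint, and D = ⋃_{i∈N} D_i; for C ⊆ N write D_C = ⋃_{i'∈C} D_{i'}, and set w_m(k) = k!·(m−k−1)!/m!. For a utility metric v : 2^D → ℝ with v(∅) = 0 and a client i, define the induced utility v^{(i)} : 2^{D_i} → ℝ by v^{(i)}(S) = Σ_{C ⊆ N∖{i}} w_n(|C|)·(v(D_C ∪ S) − v(D_C)). Suppose φ assigns to every such utility metric v, every client i ∈ N, and every block j ∈ D_i a real number φ_{i,j}(v), and write φ_i(v) = Σ_{j∈D_i} φ_{i,j}(v). Suppose φ satisfies: (LIN) for each i, j, the map v ↦ φ_{i,j}(v) is ℝ-linear; (EFF) Σ_{i∈N} Σ_{j∈D_i} φ_{i,j}(v) = v(D) for every v; (DUM-C) if v(D_C ∪ D_i) − v(D_C) = v(D_i) for all C ⊆ N∖{i}, then φ_i(v) = v(D_i); (SYM-C) if v(D_C ∪ D_{i₁}) = v(D_C ∪ D_{i₂}) for all C ⊆ N∖{i₁,i₂}, then φ_{i₁}(v) = φ_{i₂}(v); (DUM-IB)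 if v^{(i)}(S ∪ {j}) − v^{(i)}(S) = v^{(i)}({j}) for all S ⊆ D_i∖{j}, then φ_{i,j}(v) = v^{(i)}({j}); (SYM-IB) if v^{(i)}(S ∪ {j₁}) = v^{(i)}(S ∪ {j₂}) for all S ⊆ D_i∖{j₁,j₂}, then φ_{i,j₁}(v) = φ_{i,j₂}(v). Then φ coincides with Truth-Shapley: φ_{i,j}(v) = φ^TSV_{i,j}(v) := Σ_{S ⊆ D_i∖{j}} w_{|D_i|}(|S|)·(v^{(i)}(S ∪ {j}) − v^{(i)}(S)) for every v, i, and j. -/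
open Finset

/-- The induced utility `v^{(i)}(S) = ∑_{C ⊆ N∖{i}} w_n(|C|)·(v(D_C ∪ S) − v(D_C))`,
where `D_C = ⋃_{i'∈C} D_{i'}`. -/
noncomputable def vInd {α : Type*} [DecidableEq α] {ι : Type*} [Fintype ι] [DecidableEq ι]
    (Dset : ι → Finset α) (v : Finset α → ℝ) (i : ι) (S : Finset α) : ℝ :=
  ∑ C ∈ (Finset.univ.erase i).powerset,
    w (Fintype.card ι) C.card * (v (C.biUnion Dset ∪ S) - v (C.biUnion Dset))

/-- The client-level Truth-Shapley value
`φ^TSV_i(v) = ∑_{C ⊆ N∖{i}} w_n(|C|)·(v(D_{C∪{i}}) − v(D_C))`. -/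
noncomputable def tsvClient {α : Type*} [DecidableEq α] {ι : Type*} [Fintype ι] [DecidableEq ι]
    (Dset : ι → Finset α) (v : Finset α → ℝ) (i : ι) : ℝ :=
  ∑ C ∈ (Finset.univ.erase i).powerset,
    w (Fintype.card ι) C.card * (v ((insert i C).biUnion Dset) - v (C.biUnion Dset))

/-- The block-level Truth-Shapley value
`φ^TSV_{i,j}(v) = ∑_{S ⊆ D_i∖{j}} w_{|D_i|}(|S|)·(v^{(i)}(S ∪ {j}) − v^{(i)}(S))`. -/
noncomputable def tsvBlock {α : Type*} [DecidableEq α] {ι : Type*} [Fintype ι] [DecidableEq ι]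
    (Dset : ι → Finset α) (v : Finset α → ℝ) (i : ι) (j : α) : ℝ :=
  ∑ S ∈ ((Dset i).erase j).powerset,
    w (Dset i).card S.card * (vInd Dset v i (insert j S) - vInd Dset v i S)

/-!
Both `φ · i j` and Truth-Shapley are linear on grounded games (`v ∅ = 0`) and vanish on games that
are zero on every subset of `D`: for `φ` this is DUM-IB, because the induced utility of such a game
vanishes. Via the Harsanyi decomposition `v (A ∩ D) = ∑_{∅ ≠ R ⊆ D} h_v(R) u_R(A)` it is therefore
enough to compare them on unanimity games `u_R`. Writing `T` for the set of clients whose blocks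
meet `R`, the induced utility of `u_R` for client `i` is `u_{R ∩ D_i} / |T|` on subsets of `D_i`.
DUM-IB gives zero to blocks outside `R`, SYM-IB makes the blocks of `R ∩ D_i` equal, SYM-C makes
the clients of `T` equal and EFF makes their total `1`; hence `φ_{i,j}(u_R) = 1 / (|T| |R ∩ D_i|)`,
which is also the Shapley value of `u_{R ∩ D_i} / |T|` at `j`.
-/

section Weights

open scoped Nat

theorem sum_range_choose_mul_factorial (f b : ℕ) :
    ∑ k ∈ range (f + 1), f.choose k * ((k + b)! * (f - k)!) =
      f ! * b ! * (f + b + 1).choose (b + 1) := by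
  have hterm : ∀ k ∈ range (f + 1),
      f.choose k * ((k + b)! * (f - k)!) = f ! * b ! * (k + b).choose b := by
    intro k hk
    have hk : k ≤ f := Nat.lt_succ_iff.mp (mem_range.mp hk)
    have h₁ := Nat.choose_mul_factorial_mul_factorial hk
    have h₂ := Nat.choose_mul_factorial_mul_factorial (Nat.le_add_left b k)
    rw [Nat.add_sub_cancel] at h₂
    rw [← h₁, ← h₂]
    ring
  rw [sum_congr rfl hterm, ← mul_sum, ← Nat.sum_Icc_choose (f + b) b]
  congr 1
  refine sum_nbij' (· + b) (· - b) ?_ ?_ ?_ ?_ fun _ _ ↦ rfl <;>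
    intro k hk <;> simp only [mem_range, mem_Icc] at hk ⊢ <;> omega

theorem sum_range_choose_mul_w (f b : ℕ) :
    ∑ k ∈ range (f + 1), (f.choose k : ℝ) * w (f + b + 1) (k + b) = ((b : ℝ) + 1)⁻¹ := by
  have hterm : ∀ k ∈ range (f + 1), (f.choose k : ℝ) * w (f + b + 1) (k + b) =
      ((f.choose k * ((k + b)! * (f - k)!) : ℕ) : ℝ) / (f + b + 1)! := by
    intro k hk
    have : f + b + 1 - (k + b) - 1 = f - k := by omega
    rw [w, this]
    push_cast
    ring
  rw [sum_congr rfl hterm, ← sum_div, ← Nat.cast_sum, sum_range_choose_mul_factorial]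
  have hfact := Nat.choose_mul_factorial_mul_factorial (show b + 1 ≤ f + b + 1 by omega)
  rw [show f + b + 1 - (b + 1) = f by omega, Nat.factorial_succ b] at hfact
  have hchoose : ((f + b + 1).choose (b + 1) : ℝ) ≠ 0 :=
    Nat.cast_ne_zero.mpr (Nat.choose_pos (by omega)).ne'
  rw [← hfact]
  push_cast
  field_simp

theorem sum_Icc_w {α : Type*} [DecidableEq α] {B G : Finset α} (h : B ⊆ G) :
    ∑ C ∈ Icc B G, w (#G + 1) #C = ((#B : ℝ) + 1)⁻¹ := by
  have hinj : Set.InjOn (B ∪ ·) (G \ B).powerset := fun E hE E' hE' hEE' ↦ by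
    simp only [coe_powerset, Set.mem_preimage, Set.mem_powerset_iff, coe_subset] at hE hE'
    rw [← union_sdiff_cancel_left (disjoint_of_subset_right hE disjoint_sdiff),
      ← union_sdiff_cancel_left (disjoint_of_subset_right hE' disjoint_sdiff)]
    exact congrArg (· \ B) hEE'
  rw [Icc_eq_image_powerset h, sum_image hinj]
  have hcard : ∀ E ∈ (G \ B).powerset, #(B ∪ E) = #E + #B := fun E hE ↦ by
    rw [card_union_of_disjoint (disjoint_of_subset_right (mem_powerset.mp hE) disjoint_sdiff),
      add_comm]
  rw [sum_congr rfl fun E hE ↦ by rw [hcard E hE], sum_powerset_apply_card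
    (fun k ↦ w (#G + 1) (k + #B)), ← sum_range_choose_mul_w (#(G \ B)) #B]
  have : #G = #(G \ B) + #B := (card_sdiff_add_card_eq_card h).symm
  simp only [nsmul_eq_mul, this]

end Weights

section Games

variable {α : Type*}

def IsLinearOnGrounded (F : (Finset α → ℝ) → ℝ) : Prop :=
  ∀ (a b : ℝ) (v₁ v₂ : Finset α → ℝ), v₁ ∅ = 0 → v₂ ∅ = 0 →
    F (a • v₁ + b • v₂) = a * F v₁ + b * F v₂

namespace IsLinearOnGrounded

variable {F : (Finset α → ℝ) → ℝ}

theorem map_add (hF : IsLinearOnGrounded F) {v₁ v₂ : Finset α → ℝ} (h₁ : v₁ ∅ = 0)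
    (h₂ : v₂ ∅ = 0) : F (v₁ + v₂) = F v₁ + F v₂ := by
  simpa using hF 1 1 v₁ v₂ h₁ h₂

theorem map_sum {γ : Type*} (hF : IsLinearOnGrounded F) (s : Finset γ) (c : γ → ℝ)
    (g : γ → Finset α → ℝ) (hg : ∀ x ∈ s, g x ∅ = 0) :
    F (∑ x ∈ s, c x • g x) = ∑ x ∈ s, c x * F (g x) := by
  classical
  induction s using Finset.induction_on with
  | empty => simpa using hF 0 0 0 0 rfl rfl
  | insert x s hx ih =>
    have hg' : ∀ y ∈ s, g y ∅ = 0 := fun y hy ↦ hg y (mem_insert_of_mem hy)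
    have hsum : (∑ y ∈ s, c y • g y) ∅ = 0 := by
      rw [Finset.sum_apply]
      exact sum_eq_zero fun y hy ↦ by simp [hg' y hy]
    rw [sum_insert hx, sum_insert hx, ← ih hg']
    simpa using hF (c x) 1 (g x) _ (hg x (mem_insert_self x s)) hsum

end IsLinearOnGrounded

variable [DecidableEq α]

noncomputable def unanimity (R : Finset α) : Finset α → ℝ :=
  fun T ↦ if R ⊆ T then 1 else 0

theorem unanimity_empty {R : Finset α} (hR : R.Nonempty) : unanimity R ∅ = 0 :=
  if_neg fun h ↦ hR.ne_empty (subset_empty.mp h)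

theorem unanimity_insert_of_notMem {R S : Finset α} {j : α} (hj : j ∉ R) :
    unanimity R (insert j S) = unanimity R S := by
  simp only [unanimity, subset_insert_iff_of_notMem hj]

theorem unanimity_eq_zero_of_notMem {R S : Finset α} {j : α} (hjR : j ∈ R) (hjS : j ∉ S) :
    unanimity R S = 0 :=
  if_neg fun h ↦ hjS (h hjR)

noncomputable def shapleyValue (P : Finset α) (g : Finset α → ℝ) (j : α) : ℝ :=
  ∑ S ∈ (P.erase j).powerset, w #P #S * (g (insert j S) - g S)

theorem shapleyValue_congr {P : Finset α} {g g' : Finset α → ℝ} {j : α} (hj : j ∈ P)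
    (h : ∀ S ⊆ P, g S = g' S) : shapleyValue P g j = shapleyValue P g' j := by
  refine sum_congr rfl fun S hS ↦ ?_
  have hSP : S ⊆ P := (mem_powerset.mp hS).trans (erase_subset j P)
  rw [h S hSP, h _ (insert_subset hj hSP)]

theorem shapleyValue_const_mul (P : Finset α) (c : ℝ) (g : Finset α → ℝ) (j : α) :
    shapleyValue P (fun S ↦ c * g S) j = c * shapleyValue P g j := by
  simp only [shapleyValue, mul_sum]
  exact sum_congr rfl fun _ _ ↦ by ring

theorem shapleyValue_unanimity {P Q : Finset α} (hQ : Q ⊆ P) {j : α} (hj : j ∈ P) :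
    shapleyValue P (unanimity Q) j = if j ∈ Q then (#Q : ℝ)⁻¹ else 0 := by
  by_cases hjQ : j ∈ Q
  · have hterm : ∀ S ∈ (P.erase j).powerset,
        w #P #S * (unanimity Q (insert j S) - unanimity Q S) =
          if Q.erase j ⊆ S then w #P #S else 0 := by
      intro S hS
      have hjS : j ∉ S := fun h ↦ (mem_erase.mp (mem_powerset.mp hS h)).1 rfl
      simp only [unanimity, subset_insert_iff, if_neg fun h : Q ⊆ S ↦ hjS (h hjQ)]
      split_ifs <;> ring
    rw [shapleyValue, sum_congr rfl hterm, ← sum_filter, ← Icc_eq_filter_powerset,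
      ← card_erase_add_one hj, sum_Icc_w (erase_subset_erase j hQ), ← Nat.cast_add_one,
      card_erase_add_one hjQ, if_pos hjQ]
  · rw [if_neg hjQ]
    exact sum_eq_zero fun S _ ↦ by rw [unanimity_insert_of_notMem hjQ, sub_self, mul_zero]

noncomputable def harsanyiDividend (v : Finset α → ℝ) (R : Finset α) : ℝ :=
  ∑ E ∈ R.powerset, IncidenceAlgebra.mu ℝ E R * v E

theorem sum_powerset_harsanyiDividend (v : Finset α → ℝ) (A : Finset α) :
    ∑ R ∈ A.powerset, harsanyiDividend v R = v A := by
  unfold harsanyiDividend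
  rw [sum_comm' (t' := A.powerset) (s' := fun E ↦ Icc E A) fun R E ↦ by
    simp only [mem_powerset, mem_Icc]
    exact ⟨fun h ↦ ⟨⟨h.2, h.1⟩, h.2.trans h.1⟩, fun h ↦ ⟨h.1.2, h.1.1⟩⟩]
  simp_rw [← sum_mul, IncidenceAlgebra.sum_Icc_mu_right, ite_mul, one_mul, zero_mul]
  rw [sum_ite_eq' A.powerset A v, if_pos (mem_powerset_self A)]

theorem sum_harsanyiDividend_smul_unanimity_apply {v : Finset α → ℝ} (hv : v ∅ = 0)
    (D A : Finset α) :
    (∑ R ∈ D.powerset.erase ∅, harsanyiDividend v R • unanimity R) A = v (A ∩ D) := by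
  have hempty : (harsanyiDividend v ∅ • unanimity ∅) A = 0 := by
    simp [harsanyiDividend, hv]
  rw [Finset.sum_apply, sum_erase (f := fun R ↦ (harsanyiDividend v R • unanimity R) A) _ hempty,
    ← sum_powerset_harsanyiDividend v]
  simp only [Pi.smul_apply, unanimity, smul_eq_mul, mul_ite, mul_one, mul_zero]
  rw [← sum_filter]
  congr 1
  ext R
  simp only [mem_filter, mem_powerset, subset_inter_iff]
  tauto

theorem IsLinearOnGrounded.eq_sum_harsanyiDividend_mul {F : (Finset α → ℝ) → ℝ}
    (hF : IsLinearOnGrounded F) {D : Finset α}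
    (hnull : ∀ u : Finset α → ℝ, u ∅ = 0 → (∀ A ⊆ D, u A = 0) → F u = 0)
    {v : Finset α → ℝ} (hv : v ∅ = 0) :
    F v = ∑ R ∈ D.powerset.erase ∅, harsanyiDividend v R * F (unanimity R) := by
  set vD := ∑ R ∈ D.powerset.erase ∅, harsanyiDividend v R • unanimity R
  have hvD : ∀ A, vD A = v (A ∩ D) := sum_harsanyiDividend_smul_unanimity_apply hv D
  have hvD₀ : vD ∅ = 0 := by rw [hvD, empty_inter, hv]
  have hrest₀ : (v - vD) ∅ = 0 := by rw [Pi.sub_apply, hv, hvD₀, sub_zero]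
  have hrest : ∀ A ⊆ D, (v - vD) A = 0 := fun A hA ↦ by
    rw [Pi.sub_apply, hvD, inter_eq_left.mpr hA, sub_self]
  calc F v = F (vD + (v - vD)) := by rw [add_sub_cancel]
    _ = F vD := by rw [hF.map_add hvD₀ hrest₀, hnull _ hrest₀ hrest, add_zero]
    _ = _ := hF.map_sum _ _ _ fun R hR ↦
      unanimity_empty (nonempty_iff_ne_empty.mpr (ne_of_mem_erase hR))

end Games

section Clients

open Function

variable {α : Type*} [DecidableEq α] {ι : Type*} [Fintype ι] {Dset : ι → Finset α}

def meetingClients (Dset : ι → Finset α) (R : Finset α) : Finset ι :=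
  univ.filter fun i ↦ (R ∩ Dset i).Nonempty

theorem mem_meetingClients {R : Finset α} {i : ι} :
    i ∈ meetingClients Dset R ↔ (R ∩ Dset i).Nonempty := by
  simp [meetingClients]

variable [DecidableEq ι]

theorem subset_biUnion_union_iff (hdisj : Pairwise (Disjoint on Dset)) {R : Finset α}
    (hR : R ⊆ univ.biUnion Dset) {i : ι} {S : Finset α} (hS : S ⊆ Dset i) {C : Finset ι}
    (hiC : i ∉ C) :
    R ⊆ C.biUnion Dset ∪ S ↔ (meetingClients Dset R).erase i ⊆ C ∧ R ∩ Dset i ⊆ S := by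
  have hunique : ∀ {x i₁ i₂}, x ∈ Dset i₁ → x ∈ Dset i₂ → i₁ = i₂ := fun h₁ h₂ ↦
    hdisj.eq (not_disjoint_iff.mpr ⟨_, h₁, h₂⟩)
  constructor
  · intro h
    refine ⟨fun i' hi' ↦ ?_, fun x hx ↦ ?_⟩
    · obtain ⟨hi'i, hi'⟩ := mem_erase.mp hi'
      obtain ⟨x, hxRi⟩ := mem_meetingClients.mp hi'
      obtain ⟨hxR, hx⟩ := mem_inter.mp hxRi
      rcases mem_union.mp (h hxR) with hxC | hxS
      · obtain ⟨c, hc, hxc⟩ := mem_biUnion.mp hxC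
        exact hunique hxc hx ▸ hc
      · exact absurd (hunique hx (hS hxS)) hi'i
    · obtain ⟨hxR, hxi⟩ := mem_inter.mp hx
      rcases mem_union.mp (h hxR) with hxC | hxS
      · obtain ⟨c, hc, hxc⟩ := mem_biUnion.mp hxC
        exact absurd (hunique hxc hxi ▸ hc) hiC
      · exact hxS
  · rintro ⟨hC, hRS⟩ x hxR
    obtain ⟨i', -, hxi'⟩ := mem_biUnion.mp (hR hxR)
    by_cases hi'i : i' = i
    · subst hi'i
      exact mem_union_right _ (hRS (mem_inter.mpr ⟨hxR, hxi'⟩))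
    · have hi' : i' ∈ meetingClients Dset R := mem_meetingClients.mpr ⟨x, mem_inter.mpr ⟨hxR, hxi'⟩⟩
      exact mem_union_left _ (mem_biUnion.mpr ⟨i', hC (mem_erase.mpr ⟨hi'i, hi'⟩), hxi'⟩)

theorem vInd_unanimity (hdisj : Pairwise (Disjoint on Dset)) {R : Finset α}
    (hR : R ⊆ univ.biUnion Dset) (i : ι) {S : Finset α} (hS : S ⊆ Dset i) :
    vInd Dset (unanimity R) i S =
      (if i ∈ meetingClients Dset R then (#(meetingClients Dset R) : ℝ)⁻¹ else 0) *
        unanimity (R ∩ Dset i) S := by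
  have hiC : ∀ C ∈ (univ.erase i).powerset, i ∉ C := fun C hC h ↦
    (mem_erase.mp (mem_powerset.mp hC h)).1 rfl
  have hsub := fun C hC S hS ↦ subset_biUnion_union_iff hdisj hR (S := S) hS (hiC C hC)
  by_cases hi : i ∈ meetingClients Dset R
  · have hterm : ∀ C ∈ (univ.erase i).powerset,
        w (Fintype.card ι) #C * (unanimity R (C.biUnion Dset ∪ S) - unanimity R (C.biUnion Dset))
          = if (meetingClients Dset R).erase i ⊆ C then
              w (Fintype.card ι) #C * unanimity (R ∩ Dset i) S else 0 := by
      intro C hC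
      have hR₀ : unanimity R (C.biUnion Dset) = 0 := by
        have := hsub C hC ∅ (empty_subset _)
        rw [union_empty, subset_empty, ← not_nonempty_iff_eq_empty] at this
        exact if_neg fun h ↦ (this.mp h).2 (mem_meetingClients.mp hi)
      rw [hR₀, sub_zero, unanimity, unanimity]
      by_cases hCi : (meetingClients Dset R).erase i ⊆ C <;> simp [hsub C hC S hS, hCi]
    rw [vInd, sum_congr rfl hterm, ← sum_filter, ← sum_mul, ← Icc_eq_filter_powerset,
      ← card_univ, ← card_erase_add_one (mem_univ i),
      sum_Icc_w (erase_subset_erase i (subset_univ _)), if_pos hi, ← Nat.cast_add_one,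
      card_erase_add_one hi, mul_comm]
  · have hRi : R ∩ Dset i = ∅ := not_nonempty_iff_eq_empty.mp (mt mem_meetingClients.mpr hi)
    rw [if_neg hi, zero_mul, vInd]
    refine sum_eq_zero fun C hC ↦ ?_
    have hS' := hsub C hC S hS
    have h₀ := hsub C hC ∅ (empty_subset _)
    simp only [hRi, empty_subset, union_empty, and_true] at hS' h₀
    simp only [unanimity, hS', h₀, sub_self, mul_zero]

@[simp]
theorem vInd_empty (Dset : ι → Finset α) (v : Finset α → ℝ) (i : ι) : vInd Dset v i ∅ = 0 := by
  simp [vInd]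

theorem vInd_eq_zero_of_null {v : Finset α → ℝ} (hv : ∀ A ⊆ univ.biUnion Dset, v A = 0)
    (i : ι) {S : Finset α} (hS : S ⊆ Dset i) : vInd Dset v i S = 0 := by
  have hDi : Dset i ⊆ univ.biUnion Dset := subset_biUnion_of_mem Dset (mem_univ i)
  refine sum_eq_zero fun C _ ↦ ?_
  have hC : C.biUnion Dset ⊆ univ.biUnion Dset := biUnion_subset_biUnion_of_subset_left _
    (subset_univ C)
  rw [hv _ (union_subset hC (hS.trans hDi)), hv _ hC, sub_self, mul_zero]

theorem tsvBlock_eq_shapleyValue (Dset : ι → Finset α) (v : Finset α → ℝ) (i : ι) (j : α) :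
    tsvBlock Dset v i j = shapleyValue (Dset i) (vInd Dset v i) j :=
  rfl

theorem vInd_smul_add_smul (Dset : ι → Finset α) (a b : ℝ) (v₁ v₂ : Finset α → ℝ) (i : ι)
    (S : Finset α) :
    vInd Dset (a • v₁ + b • v₂) i S = a * vInd Dset v₁ i S + b * vInd Dset v₂ i S := by
  simp only [vInd, Pi.add_apply, Pi.smul_apply, smul_eq_mul, mul_sum, ← sum_add_distrib]
  exact sum_congr rfl fun _ _ ↦ by ring

theorem isLinearOnGrounded_tsvBlock (Dset : ι → Finset α) (i : ι) (j : α) :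
    IsLinearOnGrounded fun v ↦ tsvBlock Dset v i j := by
  intro a b v₁ v₂ _ _
  simp only [tsvBlock, vInd_smul_add_smul, mul_sum, ← sum_add_distrib]
  exact sum_congr rfl fun _ _ ↦ by ring

theorem tsvBlock_eq_zero_of_null {v : Finset α → ℝ} (hv : ∀ A ⊆ univ.biUnion Dset, v A = 0)
    {i : ι} {j : α} (hj : j ∈ Dset i) : tsvBlock Dset v i j = 0 := by
  refine sum_eq_zero fun S hS ↦ ?_
  have hSi : S ⊆ Dset i := (mem_powerset.mp hS).trans (erase_subset j _)
  rw [vInd_eq_zero_of_null hv i hSi, vInd_eq_zero_of_null hv i (insert_subset hj hSi), sub_self,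
    mul_zero]

theorem tsvBlock_unanimity (hdisj : Pairwise (Disjoint on Dset)) {R : Finset α}
    (hR : R ⊆ univ.biUnion Dset) {i : ι} {j : α} (hj : j ∈ Dset i) :
    tsvBlock Dset (unanimity R) i j =
      if j ∈ R then ((#(meetingClients Dset R) : ℝ) * #(R ∩ Dset i))⁻¹ else 0 := by
  rw [tsvBlock_eq_shapleyValue, shapleyValue_congr hj fun S hS ↦ vInd_unanimity hdisj hR i hS,
    shapleyValue_const_mul, shapleyValue_unanimity inter_subset_right hj]
  by_cases hjR : j ∈ R
  · have hjRi : j ∈ R ∩ Dset i := mem_inter.mpr ⟨hjR, hj⟩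
    rw [if_pos (mem_meetingClients.mpr ⟨j, hjRi⟩), if_pos hjRi, if_pos hjR, mul_inv]
  · rw [if_neg fun h ↦ hjR (mem_inter.mp h).1, if_neg hjR, mul_zero]

end Clients

section Axioms

open Function

variable {α : Type*} [DecidableEq α] {ι : Type*} [Fintype ι] [DecidableEq ι]
  {Dset : ι → Finset α} {φ : (Finset α → ℝ) → ι → α → ℝ}

def Efficient (Dset : ι → Finset α) (φ : (Finset α → ℝ) → ι → α → ℝ) : Prop :=
  ∀ v : Finset α → ℝ, v ∅ = 0 → ∑ i, ∑ j ∈ Dset i, φ v i j = v (univ.biUnion Dset)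

def ClientSymmetric (Dset : ι → Finset α) (φ : (Finset α → ℝ) → ι → α → ℝ) : Prop :=
  ∀ v : Finset α → ℝ, v ∅ = 0 → ∀ i₁ i₂ : ι,
    (∀ C : Finset ι, i₁ ∉ C → i₂ ∉ C →
      v (C.biUnion Dset ∪ Dset i₁) = v (C.biUnion Dset ∪ Dset i₂)) →
    ∑ j ∈ Dset i₁, φ v i₁ j = ∑ j ∈ Dset i₂, φ v i₂ j

def InnerBlockDummy (Dset : ι → Finset α) (φ : (Finset α → ℝ) → ι → α → ℝ) : Prop :=
  ∀ v : Finset α → ℝ, v ∅ = 0 → ∀ i : ι, ∀ j ∈ Dset i,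
    (∀ S ⊆ (Dset i).erase j, vInd Dset v i (insert j S) - vInd Dset v i S = vInd Dset v i {j}) →
    φ v i j = vInd Dset v i {j}

def InnerBlockSymmetric (Dset : ι → Finset α) (φ : (Finset α → ℝ) → ι → α → ℝ) : Prop :=
  ∀ v : Finset α → ℝ, v ∅ = 0 → ∀ i : ι, ∀ j₁ ∈ Dset i, ∀ j₂ ∈ Dset i,
    (∀ S ⊆ ((Dset i).erase j₁).erase j₂,
      vInd Dset v i (insert j₁ S) = vInd Dset v i (insert j₂ S)) →
    φ v i j₁ = φ v i j₂

theorem InnerBlockDummy.eq_zero_of_null (hDUM : InnerBlockDummy Dset φ) {v : Finset α → ℝ}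
    (hv₀ : v ∅ = 0) (hv : ∀ A ⊆ univ.biUnion Dset, v A = 0) {i : ι} {j : α} (hj : j ∈ Dset i) :
    φ v i j = 0 := by
  have hvInd := fun S (hS : S ⊆ Dset i) ↦ vInd_eq_zero_of_null hv i hS
  rw [hDUM v hv₀ i j hj fun S hS ↦ ?_, hvInd _ (singleton_subset_iff.mpr hj)]
  have hSi : S ⊆ Dset i := hS.trans (erase_subset j _)
  rw [hvInd _ (insert_subset hj hSi), hvInd _ hSi, hvInd _ (singleton_subset_iff.mpr hj),
    sub_self]

theorem InnerBlockDummy.unanimity_eq_zero (hDUM : InnerBlockDummy Dset φ)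
    (hdisj : Pairwise (Disjoint on Dset)) {R : Finset α} (hR : R ⊆ univ.biUnion Dset)
    (hRne : R.Nonempty) {i : ι} {j : α} (hj : j ∈ Dset i) (hjR : j ∉ R) :
    φ (unanimity R) i j = 0 := by
  have hinsert : ∀ S ⊆ Dset i, vInd Dset (unanimity R) i (insert j S) =
      vInd Dset (unanimity R) i S := fun S hS ↦ by
    rw [vInd_unanimity hdisj hR i (insert_subset hj hS), vInd_unanimity hdisj hR i hS,
      unanimity_insert_of_notMem fun h ↦ hjR (mem_inter.mp h).1]
  have hsingleton : vInd Dset (unanimity R) i {j} = 0 := by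
    simpa using hinsert ∅ (empty_subset _)
  rw [hDUM _ (unanimity_empty hRne) i j hj fun S hS ↦ ?_, hsingleton]
  rw [hinsert S (hS.trans (erase_subset j _)), sub_self, hsingleton]

theorem InnerBlockSymmetric.unanimity_eq (hSYM : InnerBlockSymmetric Dset φ)
    (hdisj : Pairwise (Disjoint on Dset)) {R : Finset α} (hR : R ⊆ univ.biUnion Dset)
    (hRne : R.Nonempty) {i : ι} {j₁ j₂ : α} (hj₁ : j₁ ∈ R ∩ Dset i) (hj₂ : j₂ ∈ R ∩ Dset i) :
    φ (unanimity R) i j₁ = φ (unanimity R) i j₂ := by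
  rcases eq_or_ne j₁ j₂ with rfl | hne
  · rfl
  refine hSYM _ (unanimity_empty hRne) i j₁ (mem_inter.mp hj₁).2 j₂ (mem_inter.mp hj₂).2
    fun S hS ↦ ?_
  have hj₂S : j₂ ∉ S := fun h ↦ (mem_erase.mp (hS h)).1 rfl
  have hj₁S : j₁ ∉ S := fun h ↦ (mem_erase.mp (mem_erase.mp (hS h)).2).1 rfl
  have hSi : S ⊆ Dset i := hS.trans ((erase_subset _ _).trans (erase_subset _ _))
  rw [vInd_unanimity hdisj hR i (insert_subset (mem_inter.mp hj₁).2 hSi),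
    vInd_unanimity hdisj hR i (insert_subset (mem_inter.mp hj₂).2 hSi),
    unanimity_eq_zero_of_notMem hj₂ (by simp [hne.symm, hj₂S]),
    unanimity_eq_zero_of_notMem hj₁ (by simp [hne, hj₁S])]

theorem sum_unanimity_eq_card_mul (hDUM : InnerBlockDummy Dset φ)
    (hSYM : InnerBlockSymmetric Dset φ) (hdisj : Pairwise (Disjoint on Dset)) {R : Finset α}
    (hR : R ⊆ univ.biUnion Dset) (hRne : R.Nonempty) {i : ι} {j : α} (hj : j ∈ R ∩ Dset i) :
    ∑ j' ∈ Dset i, φ (unanimity R) i j' = #(R ∩ Dset i) * φ (unanimity R) i j := by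
  calc ∑ j' ∈ Dset i, φ (unanimity R) i j'
      = ∑ j' ∈ Dset i, if j' ∈ R then φ (unanimity R) i j else 0 := by
        refine sum_congr rfl fun j' hj' ↦ ?_
        split_ifs with hj'R
        · exact hSYM.unanimity_eq hdisj hR hRne (mem_inter.mpr ⟨hj'R, hj'⟩) hj
        · exact hDUM.unanimity_eq_zero hdisj hR hRne hj' hj'R
    _ = #(R ∩ Dset i) * φ (unanimity R) i j := by
        rw [sum_ite_mem, sum_const, nsmul_eq_mul, inter_comm]

theorem ClientSymmetric.card_mul_sum_unanimity (hSYMC : ClientSymmetric Dset φ)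
    (hEFF : Efficient Dset φ) (hDUM : InnerBlockDummy Dset φ)
    (hdisj : Pairwise (Disjoint on Dset)) {R : Finset α} (hR : R ⊆ univ.biUnion Dset)
    (hRne : R.Nonempty) {i : ι} (hi : i ∈ meetingClients Dset R) :
    #(meetingClients Dset R) * ∑ j ∈ Dset i, φ (unanimity R) i j = 1 := by
  have hout : ∀ i' ∉ meetingClients Dset R, ∑ j ∈ Dset i', φ (unanimity R) i' j = 0 :=
    fun i' hi' ↦ sum_eq_zero fun j hj ↦ hDUM.unanimity_eq_zero hdisj hR hRne hj fun hjR ↦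
      hi' (mem_meetingClients.mpr ⟨j, mem_inter.mpr ⟨hjR, hj⟩⟩)
  have hsame : ∀ i' ∈ meetingClients Dset R,
      ∑ j ∈ Dset i', φ (unanimity R) i' j = ∑ j ∈ Dset i, φ (unanimity R) i j := by
    intro i' hi'
    rcases eq_or_ne i' i with rfl | hne
    · rfl
    refine hSYMC _ (unanimity_empty hRne) i' i fun C hi'C hiC ↦ ?_
    have hmiss : ∀ {k l : ι}, k ≠ l → k ∉ C → l ∈ meetingClients Dset R → l ∉ C →
        unanimity R (C.biUnion Dset ∪ Dset k) = 0 := fun hkl hkC hl hlC ↦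
      if_neg fun h ↦ hlC (((subset_biUnion_union_iff hdisj hR subset_rfl hkC).mp h).1
        (mem_erase.mpr ⟨hkl.symm, hl⟩))
    rw [hmiss hne hi'C hi hiC, hmiss hne.symm hiC hi' hi'C]
  calc #(meetingClients Dset R) * ∑ j ∈ Dset i, φ (unanimity R) i j
      = ∑ i' ∈ meetingClients Dset R, ∑ j ∈ Dset i', φ (unanimity R) i' j := by
        rw [sum_congr rfl hsame, sum_const, nsmul_eq_mul]
    _ = ∑ i', ∑ j ∈ Dset i', φ (unanimity R) i' j :=
        sum_subset (subset_univ _) fun i' _ hi' ↦ hout i' hi'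
    _ = 1 := by rw [hEFF _ (unanimity_empty hRne)]; exact if_pos hR

theorem eq_tsvBlock_unanimity (hEFF : Efficient Dset φ) (hSYMC : ClientSymmetric Dset φ)
    (hDUM : InnerBlockDummy Dset φ) (hSYM : InnerBlockSymmetric Dset φ)
    (hdisj : Pairwise (Disjoint on Dset)) {R : Finset α} (hR : R ⊆ univ.biUnion Dset)
    (hRne : R.Nonempty) {i : ι} {j : α} (hj : j ∈ Dset i) :
    φ (unanimity R) i j = tsvBlock Dset (unanimity R) i j := by
  rw [tsvBlock_unanimity hdisj hR hj]
  split_ifs with hjR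
  · have hjRi : j ∈ R ∩ Dset i := mem_inter.mpr ⟨hjR, hj⟩
    have h := hSYMC.card_mul_sum_unanimity hEFF hDUM hdisj hR hRne
      (mem_meetingClients.mpr ⟨j, hjRi⟩)
    rw [sum_unanimity_eq_card_mul hDUM hSYM hdisj hR hRne hjRi, ← mul_assoc] at h
    exact eq_inv_of_mul_eq_one_right h
  · exact hDUM.unanimity_eq_zero hdisj hR hRne hj hjR

end Axioms

theorem truth_shapley_unique_general {α : Type*} [DecidableEq α]
    {ι : Type*} [Fintype ι] [DecidableEq ι]
    (Dset : ι → Finset α)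
    (hdisj : ∀ i j : ι, i ≠ j → Disjoint (Dset i) (Dset j))
    (D : Finset α) (hD : D = Finset.univ.biUnion Dset)
    (φ : (Finset α → ℝ) → ι → α → ℝ)
    (hLIN : ∀ (i : ι), ∀ j ∈ Dset i, ∀ (a b : ℝ) (v₁ v₂ : Finset α → ℝ),
      v₁ ∅ = 0 → v₂ ∅ = 0 →
      φ (a • v₁ + b • v₂) i j = a * φ v₁ i j + b * φ v₂ i j)
    (hEFF : ∀ v : Finset α → ℝ, v ∅ = 0 →
      ∑ i : ι, ∑ j ∈ Dset i, φ v i j = v D)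
    (hSYMC : ∀ v : Finset α → ℝ, v ∅ = 0 → ∀ i₁ i₂ : ι,
      (∀ C : Finset ι, i₁ ∉ C → i₂ ∉ C →
        v (C.biUnion Dset ∪ Dset i₁) = v (C.biUnion Dset ∪ Dset i₂)) →
      ∑ j ∈ Dset i₁, φ v i₁ j = ∑ j ∈ Dset i₂, φ v i₂ j)
    (hDUMIB : ∀ v : Finset α → ℝ, v ∅ = 0 → ∀ i : ι, ∀ j ∈ Dset i,
      (∀ S ⊆ (Dset i).erase j,
        vInd Dset v i (insert j S) - vInd Dset v i S = vInd Dset v i {j}) →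
      φ v i j = vInd Dset v i {j})
    (hSYMIB : ∀ v : Finset α → ℝ, v ∅ = 0 → ∀ i : ι, ∀ j₁ ∈ Dset i, ∀ j₂ ∈ Dset i,
      (∀ S ⊆ ((Dset i).erase j₁).erase j₂,
        vInd Dset v i (insert j₁ S) = vInd Dset v i (insert j₂ S)) →
      φ v i j₁ = φ v i j₂) :
    ∀ v : Finset α → ℝ, v ∅ = 0 → ∀ i : ι, ∀ j ∈ Dset i,
      φ v i j = tsvBlock Dset v i j := by
  intro v hv i j hj
  subst hD
  rw [IsLinearOnGrounded.eq_sum_harsanyiDividend_mul (F := fun u ↦ φ u i j) (hLIN i j hj)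
      (fun u hu₀ hu ↦ InnerBlockDummy.eq_zero_of_null hDUMIB hu₀ hu hj) hv,
    (isLinearOnGrounded_tsvBlock Dset i j).eq_sum_harsanyiDividend_mul
      (fun _ _ hu ↦ tsvBlock_eq_zero_of_null hu hj) hv]
  refine sum_congr rfl fun R hR ↦ ?_
  obtain ⟨hR₀, hRD⟩ := mem_erase.mp hR
  rw [eq_tsvBlock_unanimity hEFF hSYMC hDUMIB hSYMIB hdisj (mem_powerset.mp hRD)
    (nonempty_iff_ne_empty.mpr hR₀) hj]

/-- Theorem 4.6 (uniqueness of Truth-Shapley): any data valuation metric `φ`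
satisfying LIN, EFF, DUM-C, SYM-C, DUM-IB and SYM-IB coincides with
Truth-Shapley on all utility metrics with `v ∅ = 0`. -/
theorem truth_shapley_unique {α : Type*} [DecidableEq α]
    {ι : Type*} [Fintype ι] [DecidableEq ι] [Nonempty ι]
    (Dset : ι → Finset α) (hne : ∀ i, (Dset i).Nonempty)
    (hdisj : ∀ i j : ι, i ≠ j → Disjoint (Dset i) (Dset j))
    (D : Finset α) (hD : D = Finset.univ.biUnion Dset)
    (φ : (Finset α → ℝ) → ι → α → ℝ)
    (hLIN : ∀ (i : ι), ∀ j ∈ Dset i, ∀ (a b : ℝ) (v₁ v₂ : Finset α → ℝ),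
      v₁ ∅ = 0 → v₂ ∅ = 0 →
      φ (a • v₁ + b • v₂) i j = a * φ v₁ i j + b * φ v₂ i j)
    (hEFF : ∀ v : Finset α → ℝ, v ∅ = 0 →
      ∑ i : ι, ∑ j ∈ Dset i, φ v i j = v D)
    (hDUMC : ∀ v : Finset α → ℝ, v ∅ = 0 → ∀ i : ι,
      (∀ C : Finset ι, i ∉ C →
        v (C.biUnion Dset ∪ Dset i) - v (C.biUnion Dset) = v (Dset i)) →
      ∑ j ∈ Dset i, φ v i j = v (Dset i))
    (hSYMC : ∀ v : Finset α → ℝ, v ∅ = 0 → ∀ i₁ i₂ : ι,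
      (∀ C : Finset ι, i₁ ∉ C → i₂ ∉ C →
        v (C.biUnion Dset ∪ Dset i₁) = v (C.biUnion Dset ∪ Dset i₂)) →
      ∑ j ∈ Dset i₁, φ v i₁ j = ∑ j ∈ Dset i₂, φ v i₂ j)
    (hDUMIB : ∀ v : Finset α → ℝ, v ∅ = 0 → ∀ i : ι, ∀ j ∈ Dset i,
      (∀ S ⊆ (Dset i).erase j,
        vInd Dset v i (insert j S) - vInd Dset v i S = vInd Dset v i {j}) →
      φ v i j = vInd Dset v i {j})
    (hSYMIB : ∀ v : Finset α → ℝ, v ∅ = 0 → ∀ i : ι, ∀ j₁ ∈ Dset i, ∀ j₂ ∈ Dset i,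
      (∀ S ⊆ ((Dset i).erase j₁).erase j₂,
        vInd Dset v i (insert j₁ S) = vInd Dset v i (insert j₂ S)) →
      φ v i j₁ = φ v i j₂) :
    ∀ v : Finset α → ℝ, v ∅ = 0 → ∀ i : ι, ∀ j ∈ Dset i,
      φ v i j = tsvBlock Dset v i j :=
  truth_shapley_unique_general Dset hdisj D hD φ hLIN hEFF hSYMC hDUMIB hSYMIB
end
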